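/- Let 0 < p ≤ 1, let ω be a weight on ℤ^d, and let A be a unital Banach algebra. For f ∈ ℓ¹(ℤ^d, ℂ), let F(n) = f(n)·1_A ∈ A. If F is invertible in the convolution algebra ℓ^p_ω(ℤ^d, A) with inverse g, then g takes values in ℂ·1_A; consequently f is invertible in ℓ^p_ω(ℤ^d, ℂ) if and only if F is invertible in ℓ^p_ω(ℤ^d, A). -/

import Mathlib

noncomputable def conv {d : ℕ} {A : Type*} [NormedRing A]
    (f g : (Fin d → ℤ) → A) : (Fin d → ℤ) → A :=
  fun n => ∑' m, f (n - m) * g m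

noncomputable def delta {d : ℕ} (A : Type*) [NormedRing A] [One A] : (Fin d → ℤ) → A :=
  fun n => if n = 0 then 1 else 0

/-!
Since `0 < p ≤ 1` and `ω ≥ 1`, every element of `ℓ^p_ω` lies in `ℓ¹`, where convolution is
associative. If `G` inverts `F = f • 1`, apply a Hahn–Banach functional `φ` with `φ 1 = 1`
coordinatewise: `g = φ ∘ G` inverts `f`, so `g • 1` is a right inverse of `F`, and by
associativity it coincides with the left inverse `G`.
-/

section Convolution

variable {d : ℕ} {A : Type*} [NormedRing A]

lemma conv_delta (f : (Fin d → ℤ) → A) : conv f (delta A) = f := by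
  funext n
  unfold conv delta
  rw [tsum_eq_single 0 fun m hm => by simp [hm]]
  simp

lemma delta_conv (f : (Fin d → ℤ) → A) : conv (delta A) f = f := by
  funext n
  unfold conv delta
  rw [tsum_eq_single n fun m hm => by simp [sub_eq_zero, hm.symm]]
  simp

variable [CompleteSpace A]

lemma summable_mul_shift {f g : (Fin d → ℤ) → A} (hf : Summable fun n => ‖f n‖)
    (hg : Summable fun n => ‖g n‖) (n : Fin d → ℤ) :
    Summable fun m => f (n - m) * g m :=
  Summable.of_norm_bounded (hg.mul_left (∑' k, ‖f k‖)) fun _ =>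
    (norm_mul_le _ _).trans <| mul_le_mul_of_nonneg_right
      (hf.le_tsum _ fun _ _ => norm_nonneg _) (norm_nonneg _)

lemma summable_mul_shift_mul {f g h : (Fin d → ℤ) → A} (hf : Summable fun n => ‖f n‖)
    (hg : Summable fun n => ‖g n‖) (hh : Summable fun n => ‖h n‖) (n : Fin d → ℤ) :
    Summable fun km : (Fin d → ℤ) × (Fin d → ℤ) => f (n - km.2) * g (km.2 - km.1) * h km.1 := by
  -- `(k, m) ↦ (k, m - k)` turns the kernel `‖h k‖ * ‖g (m - k)‖` into a product of ℓ¹ families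
  have hkernel : Summable fun km : (Fin d → ℤ) × (Fin d → ℤ) => ‖h km.1‖ * ‖g (km.2 - km.1)‖ :=
    (Equiv.summable_iff (Equiv.prodShear (Equiv.refl _) Equiv.subRight)).mpr
      (hh.mul_of_nonneg hg (fun _ => norm_nonneg _) fun _ => norm_nonneg _)
  refine Summable.of_norm_bounded (hkernel.mul_left (∑' k, ‖f k‖)) fun km => ?_
  calc ‖f (n - km.2) * g (km.2 - km.1) * h km.1‖
      ≤ ‖f (n - km.2)‖ * ‖g (km.2 - km.1)‖ * ‖h km.1‖ :=
        (norm_mul_le _ _).trans (mul_le_mul_of_nonneg_right (norm_mul_le _ _) (norm_nonneg _))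
    _ ≤ (∑' k, ‖f k‖) * ‖g (km.2 - km.1)‖ * ‖h km.1‖ := by
        gcongr
        exact hf.le_tsum _ fun _ _ => norm_nonneg _
    _ = (∑' k, ‖f k‖) * (‖h km.1‖ * ‖g (km.2 - km.1)‖) := by ring

lemma conv_assoc {f g h : (Fin d → ℤ) → A} (hf : Summable fun n => ‖f n‖)
    (hg : Summable fun n => ‖g n‖) (hh : Summable fun n => ‖h n‖) :
    conv (conv f g) h = conv f (conv g h) := by
  funext n
  calc conv (conv f g) h n
      = ∑' k, ∑' j, f (n - k - j) * g j * h k := by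
        refine tsum_congr fun k => ?_
        exact ((summable_mul_shift hf hg (n - k)).tsum_mul_right (h k)).symm
    _ = ∑' k, ∑' m, f (n - m) * g (m - k) * h k := by
        refine tsum_congr fun k => ?_
        rw [← (Equiv.subRight k).tsum_eq]
        simp only [Equiv.subRight_apply, sub_sub, add_sub_cancel]
    _ = ∑' m, ∑' k, f (n - m) * g (m - k) * h k :=
        (Summable.tsum_comm (f := fun k m => f (n - m) * g (m - k) * h k)
          (summable_mul_shift_mul hf hg hh n)).symm
    _ = conv f (conv g h) n := by
        refine tsum_congr fun m => ?_
        simp only [mul_assoc]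
        exact (summable_mul_shift hg hh m).tsum_mul_left (f (n - m))

lemma eq_of_conv_eq_delta {f g h : (Fin d → ℤ) → A} (hf : Summable fun n => ‖f n‖)
    (hg : Summable fun n => ‖g n‖) (hh : Summable fun n => ‖h n‖)
    (hfg : conv f g = delta A) (hgh : conv g h = delta A) : f = h :=
  calc f = conv f (conv g h) := by rw [hgh, conv_delta]
    _ = conv (conv f g) h := (conv_assoc hf hg hh).symm
    _ = h := by rw [hfg, delta_conv]

end Convolution

section ScalarEmbedding

variable {d : ℕ} {𝕜 A : Type*} [NormedField 𝕜] [NormedRing A] [NormedAlgebra 𝕜 A]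

lemma summable_norm_smul_one {ι : Type*} {f : ι → 𝕜} (hf : Summable fun n => ‖f n‖) :
    Summable fun n => ‖f n • (1 : A)‖ := by
  simpa only [norm_smul] using hf.mul_right ‖(1 : A)‖

lemma delta_smul_one : (fun n : Fin d → ℤ => delta 𝕜 n • (1 : A)) = delta A := by
  funext n
  unfold delta
  split_ifs <;> simp

lemma conv_smul_one [CompleteSpace 𝕜] {f g : (Fin d → ℤ) → 𝕜} (hf : Summable fun n => ‖f n‖)
    (hg : Summable fun n => ‖g n‖) :
    conv (fun n => f n • (1 : A)) (fun n => g n • (1 : A)) = fun n => conv f g n • (1 : A) := by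
  funext n
  unfold conv
  rw [← (summable_mul_shift hf hg n).tsum_smul_const]
  exact tsum_congr fun m => by rw [smul_mul_smul_comm, one_mul]

variable [CompleteSpace A] (φ : A →L[𝕜] 𝕜) {f : (Fin d → ℤ) → 𝕜} {G : (Fin d → ℤ) → A}

lemma map_conv_smul_one_left (hf : Summable fun n => ‖f n‖) (hG : Summable fun n => ‖G n‖) :
    (fun n => φ (conv (fun n => f n • (1 : A)) G n)) = conv f fun n => φ (G n) := by
  funext n
  unfold conv
  rw [φ.map_tsum (summable_mul_shift (summable_norm_smul_one hf) hG n)]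
  exact tsum_congr fun m => by rw [smul_mul_assoc, one_mul, map_smul, smul_eq_mul]

lemma map_conv_smul_one_right (hf : Summable fun n => ‖f n‖) (hG : Summable fun n => ‖G n‖) :
    (fun n => φ (conv G (fun n => f n • (1 : A)) n)) = conv (fun n => φ (G n)) f := by
  funext n
  unfold conv
  rw [φ.map_tsum (summable_mul_shift hG (summable_norm_smul_one hf) n)]
  exact tsum_congr fun m => by rw [mul_smul_comm, mul_one, map_smul, smul_eq_mul, mul_comm]

end ScalarEmbedding

lemma exists_scalar_inverse_of_conv_eq_delta {d : ℕ} {𝕜 A : Type*} [RCLike 𝕜] [NormedRing A]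
    [NormOneClass A] [NormedAlgebra 𝕜 A] [CompleteSpace A]
    {f : (Fin d → ℤ) → 𝕜} (hf : Summable fun n => ‖f n‖)
    {G : (Fin d → ℤ) → A} (hG : Summable fun n => ‖G n‖)
    (hFG : conv (fun n => f n • (1 : A)) G = delta A)
    (hGF : conv G (fun n => f n • (1 : A)) = delta A) :
    ∃ g : (Fin d → ℤ) → 𝕜, (∀ n, ‖g n‖ ≤ ‖G n‖) ∧ conv f g = delta 𝕜 ∧ conv g f = delta 𝕜 ∧
      G = fun n => g n • (1 : A) := by
  obtain ⟨φ, hφ_norm, hφ_one⟩ := exists_dual_vector 𝕜 (1 : A) (by simp)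
  set g : (Fin d → ℤ) → 𝕜 := fun n => φ (G n)
  have hg_le : ∀ n, ‖g n‖ ≤ ‖G n‖ := fun n => by
    simpa only [hφ_norm, one_mul] using φ.le_opNorm (G n)
  have hg : Summable fun n => ‖g n‖ := hG.of_nonneg_of_le (fun _ => norm_nonneg _) hg_le
  have hφ_delta : (fun n : Fin d → ℤ => φ (delta A n)) = delta 𝕜 := by
    funext n
    unfold delta
    split_ifs <;> simp [hφ_one]
  have hfg : conv f g = delta 𝕜 := by rw [← map_conv_smul_one_left φ hf hG, hFG, hφ_delta]
  have hgf : conv g f = delta 𝕜 := by rw [← map_conv_smul_one_right φ hf hG, hGF, hφ_delta]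
  have hFg : conv (fun n => f n • (1 : A)) (fun n => g n • (1 : A)) = delta A := by
    rw [conv_smul_one hf hg, hfg, delta_smul_one]
  exact ⟨g, hg_le, hfg, hgf,
    eq_of_conv_eq_delta hG (summable_norm_smul_one hf) (summable_norm_smul_one hg) hGF hFg⟩

lemma summable_norm_of_summable_norm_rpow {ι E : Type*} [NormedAddCommGroup E] {p : ℝ}
    (hp0 : 0 < p) (hp1 : p ≤ 1) {u : ι → E} (hu : Summable fun i => ‖u i‖ ^ p) :
    Summable fun i => ‖u i‖ := by
  have hp : (ENNReal.ofReal p).toReal = p := ENNReal.toReal_ofReal hp0.le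
  have hu_p : Memℓp u (ENNReal.ofReal p) := (memℓp_gen_iff (by rwa [hp])).2 (by rwa [hp])
  simpa using (memℓp_gen_iff (by simp)).1 (hu_p.of_exponent_ge (ENNReal.ofReal_le_one.2 hp1))

lemma summable_norm_of_summable_weighted_rpow {ι E : Type*} [NormedAddCommGroup E] {p : ℝ}
    (hp0 : 0 < p) (hp1 : p ≤ 1) {ω : ι → ℝ} (hω : ∀ i, 1 ≤ ω i) {u : ι → E}
    (hu : Summable fun i => ‖u i‖ ^ p * ω i ^ p) : Summable fun i => ‖u i‖ :=
  summable_norm_of_summable_norm_rpow hp0 hp1 <| hu.of_nonneg_of_le (fun _ => by positivity)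
    fun i => le_mul_of_one_le_right (by positivity) (Real.one_le_rpow (hω i) hp0.le)

theorem scalar_invertibility_transfers_general (d : ℕ) (p : ℝ) (hp0 : 0 < p) (hp1 : p ≤ 1)
    (ω : (Fin d → ℤ) → ℝ)
    (hω1 : ∀ n, 1 ≤ ω n)
    (A : Type*) [NormedRing A] [NormOneClass A] [NormedAlgebra ℂ A] [CompleteSpace A]
    (f : (Fin d → ℤ) → ℂ) (hf : Summable (fun n => ‖f n‖))
    (F : (Fin d → ℤ) → A) (hF : ∀ n, F n = (f n) • (1 : A)) :
    (∀ G : (Fin d → ℤ) → A,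
      Summable (fun n => ‖G n‖ ^ p * ω n ^ p) →
      conv F G = delta A → conv G F = delta A →
      ∀ n, ∃ c : ℂ, G n = c • (1 : A)) ∧
    ((∃ g : (Fin d → ℤ) → ℂ,
        Summable (fun n => ‖g n‖ ^ p * ω n ^ p) ∧
        conv f g = delta ℂ ∧ conv g f = delta ℂ) ↔
      (∃ G : (Fin d → ℤ) → A,
        Summable (fun n => ‖G n‖ ^ p * ω n ^ p) ∧
        conv F G = delta A ∧ conv G F = delta A)) := by
  obtain rfl : F = fun n => f n • (1 : A) := funext hF
  refine ⟨fun G hG hFG hGF n => ?_, fun ⟨g, hg, hfg, hgf⟩ => ?_, fun ⟨G, hG, hFG, hGF⟩ => ?_⟩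
  · have hG_norm := summable_norm_of_summable_weighted_rpow hp0 hp1 hω1 hG
    obtain ⟨g, -, -, -, rfl⟩ := exists_scalar_inverse_of_conv_eq_delta hf hG_norm hFG hGF
    exact ⟨g n, rfl⟩
  · have hg_norm := summable_norm_of_summable_weighted_rpow hp0 hp1 hω1 hg
    refine ⟨fun n => g n • (1 : A), by simpa only [norm_smul, norm_one, mul_one] using hg, ?_, ?_⟩
    · rw [conv_smul_one hf hg_norm, hfg, delta_smul_one]
    · rw [conv_smul_one hg_norm hf, hgf, delta_smul_one]
  · have hG_norm := summable_norm_of_summable_weighted_rpow hp0 hp1 hω1 hG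
    obtain ⟨g, hg_le, hfg, hgf, -⟩ := exists_scalar_inverse_of_conv_eq_delta hf hG_norm hFG hGF
    have hω_pow : ∀ n, 0 ≤ ω n ^ p := fun n => Real.rpow_nonneg (zero_le_one.trans (hω1 n)) p
    refine ⟨g, hG.of_nonneg_of_le (fun n => mul_nonneg (by positivity) (hω_pow n))
      fun n => mul_le_mul_of_nonneg_right ?_ (hω_pow n), hfg, hgf⟩
    exact Real.rpow_le_rpow (norm_nonneg _) (hg_le n) hp0.le

theorem scalar_invertibility_transfers (d : ℕ) (p : ℝ) (hp0 : 0 < p) (hp1 : p ≤ 1)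
    (ω : (Fin d → ℤ) → ℝ)
    (hω1 : ∀ n, 1 ≤ ω n) (hωsub : ∀ m n, ω (m + n) ≤ ω m * ω n)
    (A : Type*) [NormedRing A] [NormOneClass A] [NormedAlgebra ℂ A] [CompleteSpace A]
    (f : (Fin d → ℤ) → ℂ) (hf : Summable (fun n => ‖f n‖))
    (F : (Fin d → ℤ) → A) (hF : ∀ n, F n = (f n) • (1 : A)) :
    (∀ G : (Fin d → ℤ) → A,
      Summable (fun n => ‖G n‖ ^ p * ω n ^ p) →
      conv F G = delta A → conv G F = delta A →
      ∀ n, ∃ c : ℂ, G n = c • (1 : A)) ∧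
    ((∃ g : (Fin d → ℤ) → ℂ,
        Summable (fun n => ‖g n‖ ^ p * ω n ^ p) ∧
        conv f g = delta ℂ ∧ conv g f = delta ℂ) ↔
      (∃ G : (Fin d → ℤ) → A,
        Summable (fun n => ‖G n‖ ^ p * ω n ^ p) ∧
        conv F G = delta A ∧ conv G F = delta A)) :=
  scalar_invertibility_transfers_general d p hp0 hp1 ω hω1 A f hf F hF
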